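/- arXiv:1607.08287 — 2 statements merged into one kernel-verified Lean document; each statement's English description precedes it below -/
import Mathlib

section
/- Let $K = 2$, $\rho_1, \rho_2 > 0$ with $\rho_1 + \rho_2 = 1$, $\alpha_1, \alpha_2, \sigma_1, \sigma_2 > 0$. Define $M_{ij} = -\alpha_i(\delta_{ij} - \rho_j)$, $R = \mathrm{diag}(\rho_1 \sigma_1^{-2}, \rho_2 \sigma_2^{-2})$, $\varrho = (\rho_1, \rho_2)^T$, $\gamma = \alpha_2\rho_1 + \alpha_1\rho_2$. Then for all $s \ge 0$: $\varrho^T e^{Ms} R^{-1} (e^{Ms})^T \varrho = \frac{\sigma_1^2 \rho_1}{\gamma^2}\big(\alpha_2 + \rho_2(\alpha_1 - \alpha_2)e^{-\gamma s}\big)^2 + \frac{\sigma_2^2 \rho_2}{\gamma^2}\big(\alpha_1 + \rho_1(\alpha_2 - \alpha_1)e^{-\gamma s}\big)^2$. -/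
/-!
The row vector `ρ` splits along two left eigenvectors of `M`: the stationary direction `ρ / α`
(eigenvalue `0`) and `(1, -1)` (eigenvalue `-γ`). Since `w e^{sM} = e^{sμ} w` for a left
eigenvector `w` with eigenvalue `μ`, the vector `v = ρ e^{sM} = (e^{sM})ᵀ ρ` is explicit, and the
quadratic form is `vᵀ R⁻¹ v`.
-/

open scoped Matrix
open NormedSpace Matrix

namespace Matrix

variable {n : Type*} [Fintype n] [DecidableEq n]

theorem vecMul_pow_of_vecMul_eq_smul {A : Matrix n n ℝ} {w : n → ℝ} {μ : ℝ}
    (h : w ᵥ* A = μ • w) (k : ℕ) : w ᵥ* A ^ k = μ ^ k • w := by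
  induction k with
  | zero => simp
  | succ k ih => rw [pow_succ, ← vecMul_vecMul, ih, smul_vecMul, h, smul_smul, pow_succ]

theorem vecMul_exp_of_vecMul_eq_smul {A : Matrix n n ℝ} {w : n → ℝ} {μ : ℝ}
    (h : w ᵥ* A = μ • w) : w ᵥ* exp A = Real.exp μ • w := by
  -- `exp` does not depend on the norm; any normed algebra structure gives its power series
  let _ := Matrix.linftyOpNormedRing (n := n) (α := ℝ)
  let _ := Matrix.linftyOpNormedAlgebra (n := n) (R := ℝ) (α := ℝ)
  have hA := (exp_series_hasSum_exp' (𝕂 := ℝ) A).mapL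
    (LinearMap.toContinuousLinearMap (vecMulBilin ℝ ℝ w))
  have hμ := (exp_series_hasSum_exp' (𝕂 := ℝ) μ).smul_const w
  simp only [LinearMap.coe_toContinuousLinearMap', vecMulBilin_apply, vecMul_smul,
    vecMul_pow_of_vecMul_eq_smul h, smul_smul] at hA
  simp only [smul_eq_mul, ← Real.exp_eq_exp_ℝ] at hμ
  exact hA.unique hμ

theorem vecMul_exp_smul_of_vecMul_eq_smul {A : Matrix n n ℝ} {w : n → ℝ} {μ : ℝ}
    (h : w ᵥ* A = μ • w) (s : ℝ) : w ᵥ* exp (s • A) = Real.exp (s * μ) • w :=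
  vecMul_exp_of_vecMul_eq_smul <| by rw [vecMul_smul, h, smul_smul]

end Matrix

theorem Matrix.dotProduct_mul_mul_transpose_mulVec {m n R : Type*} [Fintype m] [Fintype n]
    [CommSemiring R] (v : m → R) (A : Matrix m n R) (D : Matrix n n R) :
    v ⬝ᵥ ((A * D * Aᵀ) *ᵥ v) = (v ᵥ* A) ⬝ᵥ (D *ᵥ (v ᵥ* A)) := by
  rw [← mulVec_mulVec, ← mulVec_mulVec, dotProduct_mulVec, mulVec_transpose]

def rateMatrix {K : ℕ} (α ρ : Fin K → ℝ) : Matrix (Fin K) (Fin K) ℝ :=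
  Matrix.of fun i j => -(α i) * ((if i = j then (1:ℝ) else 0) - ρ j)

theorem vecMul_rateMatrix {K : ℕ} (α ρ w : Fin K → ℝ) :
    w ᵥ* rateMatrix α ρ = (∑ i, w i * α i) • ρ - fun j => w j * α j := by
  ext j
  have hterm : ∀ i, w i * rateMatrix α ρ i j =
      w i * α i * ρ j - if i = j then w i * α i else 0 := by
    intro i
    split_ifs <;> simp [rateMatrix, *] <;> ring
  simp only [vecMul, dotProduct, hterm, Finset.sum_sub_distrib, Finset.sum_ite_eq',
    Finset.mem_univ, if_true, ← Finset.sum_mul, Pi.sub_apply, Pi.smul_apply, smul_eq_mul]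

theorem div_vecMul_rateMatrix {K : ℕ} {α ρ : Fin K → ℝ} (hρ : ∑ i, ρ i = 1)
    (hα : ∀ i, α i ≠ 0) : (ρ / α) ᵥ* rateMatrix α ρ = 0 := by
  simp [vecMul_rateMatrix, div_mul_cancel₀ _ (hα _), hρ]

def relaxationRate (α ρ : Fin 2 → ℝ) : ℝ :=
  α 1 * ρ 0 + α 0 * ρ 1

section TwoStates

variable {α ρ : Fin 2 → ℝ}

theorem vecMul_rateMatrix_two (hρ : ρ 0 + ρ 1 = 1) :
    ![1, -1] ᵥ* rateMatrix α ρ = -relaxationRate α ρ • ![1, -1] := by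
  rw [vecMul_rateMatrix]
  ext j
  fin_cases j <;> simp [relaxationRate]
  · linear_combination α 0 * hρ
  · linear_combination -α 1 * hρ

theorem eq_smul_div_add_smul (hρ : ρ 0 + ρ 1 = 1) (hα : ∀ i, α i ≠ 0)
    (hγ : relaxationRate α ρ ≠ 0) :
    ρ = (α 0 * α 1 / relaxationRate α ρ) • (ρ / α) +
      (ρ 0 * ρ 1 * (α 0 - α 1) / relaxationRate α ρ) • ![1, -1] := by
  have := hα 0
  have := hα 1
  ext i
  fin_cases i <;> simp <;> field_simp <;> unfold relaxationRate
  · linear_combination ρ 0 * α 1 * hρ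
  · linear_combination ρ 1 * α 0 * hρ

theorem vecMul_exp_smul_rateMatrix_two (hρ : ρ 0 + ρ 1 = 1) (hα : ∀ i, α i ≠ 0)
    (hγ : relaxationRate α ρ ≠ 0) (s : ℝ) :
    ρ ᵥ* exp (s • rateMatrix α ρ) = (relaxationRate α ρ)⁻¹ •
      ![ρ 0 * (α 1 + ρ 1 * (α 0 - α 1) * Real.exp (-relaxationRate α ρ * s)),
        ρ 1 * (α 0 + ρ 0 * (α 1 - α 0) * Real.exp (-relaxationRate α ρ * s))] := by
  have hstat := vecMul_exp_smul_of_vecMul_eq_smul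
    (by rw [div_vecMul_rateMatrix (by simpa using hρ) hα, zero_smul]) s
  have hfast := vecMul_exp_smul_of_vecMul_eq_smul (vecMul_rateMatrix_two (α := α) hρ) s
  nth_rw 1 [eq_smul_div_add_smul hρ hα hγ]
  rw [add_vecMul, smul_vecMul, smul_vecMul, hstat, hfast]
  have := hα 0
  have := hα 1
  ext i
  fin_cases i <;> simp <;> field_simp
  all_goals ring

end TwoStates

theorem statement12_general (ρ α σ : Fin 2 → ℝ)
    (hρ : ∀ k, 0 < ρ k) (hρsum : ρ 0 + ρ 1 = 1)
    (hα : ∀ k, 0 < α k) (s : ℝ) :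
    let M : Matrix (Fin 2) (Fin 2) ℝ :=
      Matrix.of fun i j => -(α i) * ((if i = j then (1:ℝ) else 0) - ρ j)
    let Rinv : Matrix (Fin 2) (Fin 2) ℝ := Matrix.diagonal fun i => σ i ^ 2 / ρ i
    let γ : ℝ := α 1 * ρ 0 + α 0 * ρ 1
    let E : Matrix (Fin 2) (Fin 2) ℝ := NormedSpace.exp (s • M)
    ρ ⬝ᵥ ((E * Rinv * Eᵀ) *ᵥ ρ) =
      σ 0 ^ 2 * ρ 0 / γ ^ 2 * (α 1 + ρ 1 * (α 0 - α 1) * Real.exp (-γ * s)) ^ 2 +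
        σ 1 ^ 2 * ρ 1 / γ ^ 2 * (α 0 + ρ 0 * (α 1 - α 0) * Real.exp (-γ * s)) ^ 2 := by
  intro M Rinv γ E
  have := hρ 0
  have := hρ 1
  have hγ : γ ≠ 0 := by have := hα 0; have := hα 1; positivity
  have hv : ρ ᵥ* E = γ⁻¹ • ![ρ 0 * (α 1 + ρ 1 * (α 0 - α 1) * Real.exp (-γ * s)),
      ρ 1 * (α 0 + ρ 0 * (α 1 - α 0) * Real.exp (-γ * s))] :=
    vecMul_exp_smul_rateMatrix_two hρsum (fun k => (hα k).ne') hγ s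
  rw [dotProduct_mul_mul_transpose_mulVec, hv]
  simp [Rinv, mulVec_diagonal, dotProduct, Fin.sum_univ_two]
  field_simp

/-- explicit formula for the quadratic form
`ϱᵀ e^{Ms} R⁻¹ (e^{Ms})ᵀ ϱ` in the two-group (`K = 2`) case. -/
theorem statement12 (ρ α σ : Fin 2 → ℝ)
    (hρ : ∀ k, 0 < ρ k) (hρsum : ρ 0 + ρ 1 = 1)
    (hα : ∀ k, 0 < α k) (hσ : ∀ k, 0 < σ k) (s : ℝ) (hs : 0 ≤ s) :
    let M : Matrix (Fin 2) (Fin 2) ℝ :=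
      Matrix.of fun i j => -(α i) * ((if i = j then (1:ℝ) else 0) - ρ j)
    let Rinv : Matrix (Fin 2) (Fin 2) ℝ := Matrix.diagonal fun i => σ i ^ 2 / ρ i
    let γ : ℝ := α 1 * ρ 0 + α 0 * ρ 1
    let E : Matrix (Fin 2) (Fin 2) ℝ := NormedSpace.exp (s • M)
    ρ ⬝ᵥ ((E * Rinv * Eᵀ) *ᵥ ρ) =
      σ 0 ^ 2 * ρ 0 / γ ^ 2 * (α 1 + ρ 1 * (α 0 - α 1) * Real.exp (-γ * s)) ^ 2 +
        σ 1 ^ 2 * ρ 1 / γ ^ 2 * (α 0 + ρ 0 * (α 1 - α 0) * Real.exp (-γ * s)) ^ 2 :=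
  statement12_general ρ α σ hρ hρsum hα s
end

section
/- Let $K = 2$, $\rho_1 + \rho_2 = 1$ with $\rho_1, \rho_2 > 0$, $\alpha_1, \alpha_2, \sigma_1, \sigma_2 > 0$, $\gamma = \alpha_2\rho_1 + \alpha_1\rho_2$, and $V_T^2 = \int_0^T \varrho^T e^{Ms} R^{-1}(e^{Ms})^T \varrho\, ds$ where $M_{ij} = -\alpha_i(\delta_{ij} - \rho_j)$ and $R = \mathrm{diag}(\rho_i \sigma_i^{-2})$. Then $V_T^2 = \frac{\sigma_1^2\rho_1}{\gamma^2}\big[\alpha_2^2 T + \frac{\rho_2^2(\alpha_1-\alpha_2)^2}{2\gamma}(1 - e^{-2\gamma T}) + \frac{2\alpha_2\rho_2(\alpha_1-\alpha_2)}{\gamma}(1 - e^{-\gamma T})\big] + \frac{\sigma_2^2\rho_2}{\gamma^2}\big[\alpha_1^2 T + \frac{\rho_1^2(\alpha_1-\alpha_2)^2}{2\gamma}(1 - e^{-2\gamma T}) + \frac{2\alpha_1\rho_1(\alpha_2-\alpha_1)}{\gamma}(1 - e^{-\gamma T})\big]$. -/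
/-!
Since `ρ 0 + ρ 1 = 1`, the drift matrix `M` has rank one and `M * M = -γ • M`, so
`exp (s • M) = 1 + ((1 - e^{-γ s}) / γ) • M`. Hence `ρᵀ e^{Ms}` has entries
`ρ i * (α j + ρ j * (α i - α j) * e^{-γ s}) / γ` (`j ≠ i`), the integrand is a combination of
squares of affine functions of `e^{-γ s}`, and these are integrated explicitly.
-/

open scoped Matrix Nat

open Matrix

theorem exp_smul_eq_of_mul_self {𝔸 : Type*} [NormedRing 𝔸] [NormedAlgebra ℝ 𝔸] [CompleteSpace 𝔸]
    {A : 𝔸} {c : ℝ} (hc : c ≠ 0) (hA : A * A = c • A) (t : ℝ) :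
    NormedSpace.exp (t • A) = 1 + ((Real.exp (c * t) - 1) / c) • A := by
  have hpow : ∀ n : ℕ, A ^ (n + 1) = c ^ n • A := by
    intro n
    induction n with
    | zero => simp
    | succ n ih => rw [pow_succ, ih, smul_mul_assoc, hA, smul_smul, pow_succ]
  -- `c • (t • A) ^ n = (c * t) ^ n • A` for `n ≥ 1`: the two series differ only at `n = 0`.
  have hterm : ∀ n ≠ 0, c • ((n !⁻¹ : ℝ) • (t • A) ^ n) - ((n !⁻¹ : ℝ) • (c * t) ^ n) • A = 0 := by
    rintro (_ | n) hn
    · exact absurd rfl hn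
    · rw [smul_pow, hpow, smul_smul, smul_smul, smul_smul, sub_eq_zero]
      congr 1
      ring
  have hsum := ((NormedSpace.exp_series_hasSum_exp' (𝕂 := ℝ) (t • A)).const_smul c).sub
    ((NormedSpace.exp_series_hasSum_exp' (𝕂 := ℝ) (c * t)).smul_const A)
  have key := hsum.unique (hasSum_single 0 hterm)
  rw [← Real.exp_eq_exp_ℝ] at key
  simp only [pow_zero, Nat.factorial_zero, Nat.cast_one, inv_one, one_smul] at key
  rw [div_eq_inv_mul, mul_smul, sub_smul, one_smul, ← sub_eq_iff_eq_add', ← smul_right_inj hc,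
    smul_inv_smul₀ hc]
  linear_combination (norm := module) key

theorem dotProduct_mul_diagonal_mul_transpose_mulVec {ι : Type*} [Fintype ι] [DecidableEq ι]
    (A : Matrix ι ι ℝ) (d v : ι → ℝ) :
    v ⬝ᵥ ((A * diagonal d * Aᵀ) *ᵥ v) = ∑ i, d i * (v ᵥ* A) i ^ 2 := by
  rw [dotProduct_mulVec, ← vecMul_vecMul, vecMul_transpose, dotProduct_comm, dotProduct_mulVec,
    ← vecMul_vecMul]
  simp only [dotProduct, vecMul_diagonal, sq]
  exact Finset.sum_congr rfl fun i _ => by ring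

theorem integral_sq_add_mul_exp (a b : ℝ) {γ : ℝ} (hγ : γ ≠ 0) (T : ℝ) :
    ∫ s in (0:ℝ)..T, (a + b * Real.exp (-γ * s)) ^ 2 =
      a ^ 2 * T + b ^ 2 / (2 * γ) * (1 - Real.exp (-2 * γ * T)) +
        2 * a * b / γ * (1 - Real.exp (-γ * T)) := by
  have hderiv : ∀ s : ℝ, HasDerivAt
      (fun s => a ^ 2 * s - 2 * a * b / γ * Real.exp (-γ * s) -
        b ^ 2 / (2 * γ) * Real.exp (-2 * γ * s))
      ((a + b * Real.exp (-γ * s)) ^ 2) s := by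
    intro s
    have h1 := ((hasDerivAt_id' s).const_mul (-γ)).exp.const_mul (2 * a * b / γ)
    have h2 := ((hasDerivAt_id' s).const_mul (-2 * γ)).exp.const_mul (b ^ 2 / (2 * γ))
    refine ((((hasDerivAt_id' s).const_mul (a ^ 2)).sub h1).sub h2).congr_deriv ?_
    rw [show -2 * γ * s = -γ * s + -γ * s by ring, Real.exp_add]
    field_simp
    ring
  rw [intervalIntegral.integral_eq_sub_of_hasDerivAt (fun s _ => hderiv s)
    ((by fun_prop : Continuous fun s => (a + b * Real.exp (-γ * s)) ^ 2).intervalIntegrable _ _)]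
  simp only [mul_zero, Real.exp_zero]
  field_simp
  ring

def meanFieldDrift {ι : Type*} [DecidableEq ι] (α ρ : ι → ℝ) : Matrix ι ι ℝ :=
  of fun i j => -(α i) * ((if i = j then (1:ℝ) else 0) - ρ j)

theorem vecMul_meanFieldDrift {ι : Type*} [Fintype ι] [DecidableEq ι] (α ρ : ι → ℝ) :
    ρ ᵥ* meanFieldDrift α ρ = fun j => ρ j * (α ⬝ᵥ ρ - α j) := by
  ext j
  simp only [vecMul, dotProduct, meanFieldDrift, of_apply]
  have hterm : ∀ i, ρ i * (-α i * ((if i = j then 1 else 0) - ρ j)) =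
      ρ j * (α i * ρ i) - if i = j then ρ j * α j else 0 := by
    intro i
    split_ifs with h
    · subst h; ring
    · ring
  rw [Finset.sum_congr rfl fun i _ => hterm i, Finset.sum_sub_distrib, ← Finset.mul_sum,
    Finset.sum_ite_eq', if_pos (Finset.mem_univ j), mul_sub]

theorem meanFieldDrift_mul_self {α ρ : Fin 2 → ℝ} (hρ : ρ 0 + ρ 1 = 1) :
    meanFieldDrift α ρ * meanFieldDrift α ρ = -(α 1 * ρ 0 + α 0 * ρ 1) • meanFieldDrift α ρ := by
  have hρ1 : ρ 1 = 1 - ρ 0 := by linarith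
  ext i j
  fin_cases i <;> fin_cases j <;>
    simp [meanFieldDrift, Matrix.mul_apply, Fin.sum_univ_two, hρ1] <;> ring

theorem exp_smul_meanFieldDrift {α ρ : Fin 2 → ℝ} (hρ : ρ 0 + ρ 1 = 1) {γ : ℝ}
    (hγ : γ = α 1 * ρ 0 + α 0 * ρ 1) (hγ0 : γ ≠ 0) (s : ℝ) :
    NormedSpace.exp (s • meanFieldDrift α ρ) =
      1 + ((1 - Real.exp (-γ * s)) / γ) • meanFieldDrift α ρ := by
  -- any algebra norm on matrices will do: all induce the product topology used by `exp`
  let := Matrix.linftyOpNormedRing (n := Fin 2) (α := ℝ)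
  let := Matrix.linftyOpNormedAlgebra (n := Fin 2) (α := ℝ) (R := ℝ)
  refine (exp_smul_eq_of_mul_self (neg_ne_zero.mpr hγ0)
    (hγ ▸ meanFieldDrift_mul_self hρ) s).trans ?_
  rw [div_neg, ← neg_div, neg_sub, neg_mul]

theorem dotProduct_exp_meanFieldDrift_mulVec {α ρ : Fin 2 → ℝ} (σ : Fin 2 → ℝ)
    (hρ : ρ 0 + ρ 1 = 1) {γ : ℝ} (hγ : γ = α 1 * ρ 0 + α 0 * ρ 1) (hγ0 : γ ≠ 0) (s : ℝ) :
    ρ ⬝ᵥ ((NormedSpace.exp (s • meanFieldDrift α ρ) * diagonal (fun i => σ i ^ 2 / ρ i) *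
        (NormedSpace.exp (s • meanFieldDrift α ρ))ᵀ) *ᵥ ρ) =
      σ 0 ^ 2 * ρ 0 / γ ^ 2 * (α 1 + ρ 1 * (α 0 - α 1) * Real.exp (-γ * s)) ^ 2 +
        σ 1 ^ 2 * ρ 1 / γ ^ 2 * (α 0 + ρ 0 * (α 1 - α 0) * Real.exp (-γ * s)) ^ 2 := by
  have hw : ∀ i, (ρ ᵥ* NormedSpace.exp (s • meanFieldDrift α ρ)) i =
      ρ i * ((γ + (1 - Real.exp (-γ * s)) * (α ⬝ᵥ ρ - α i)) / γ) := by
    intro i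
    rw [exp_smul_meanFieldDrift hρ hγ hγ0, vecMul_add, vecMul_one, vecMul_smul,
      vecMul_meanFieldDrift]
    simp only [Pi.add_apply, Pi.smul_apply, smul_eq_mul]
    field_simp
  set e := Real.exp (-γ * s)
  have hρ1 : ρ 1 = 1 - ρ 0 := by linarith
  have hw0 : γ + (1 - e) * (α ⬝ᵥ ρ - α 0) = α 1 + ρ 1 * (α 0 - α 1) * e := by
    simp only [dotProduct, Fin.sum_univ_two]
    rw [hγ, hρ1]
    ring
  have hw1 : γ + (1 - e) * (α ⬝ᵥ ρ - α 1) = α 0 + ρ 0 * (α 1 - α 0) * e := by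
    simp only [dotProduct, Fin.sum_univ_two]
    rw [hγ, hρ1]
    ring
  have hsq : ∀ a r x : ℝ, a / r * (r * x) ^ 2 = a * r * x ^ 2 := fun a r x =>
    calc a / r * (r * x) ^ 2 = a * (r * r / r) * x ^ 2 := by ring
      _ = a * r * x ^ 2 := by rw [mul_self_div_self]
  rw [dotProduct_mul_diagonal_mul_transpose_mulVec, Fin.sum_univ_two, hw, hw, hsq, hsq, hw0, hw1]
  ring

theorem statement13_general (ρ α σ : Fin 2 → ℝ)
    (hρ : ∀ k, 0 < ρ k) (hρsum : ρ 0 + ρ 1 = 1)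
    (hα : ∀ k, 0 < α k) (T : ℝ) :
    let M : Matrix (Fin 2) (Fin 2) ℝ :=
      Matrix.of fun i j => -(α i) * ((if i = j then (1:ℝ) else 0) - ρ j)
    let Rinv : Matrix (Fin 2) (Fin 2) ℝ := Matrix.diagonal fun i => σ i ^ 2 / ρ i
    let γ : ℝ := α 1 * ρ 0 + α 0 * ρ 1
    (∫ s in (0:ℝ)..T,
        ρ ⬝ᵥ (((NormedSpace.exp (s • M)) * Rinv * (NormedSpace.exp (s • M))ᵀ) *ᵥ ρ)) =
      σ 0 ^ 2 * ρ 0 / γ ^ 2 *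
          (α 1 ^ 2 * T + ρ 1 ^ 2 * (α 0 - α 1) ^ 2 / (2 * γ) * (1 - Real.exp (-2 * γ * T)) +
            2 * α 1 * ρ 1 * (α 0 - α 1) / γ * (1 - Real.exp (-γ * T))) +
        σ 1 ^ 2 * ρ 1 / γ ^ 2 *
          (α 0 ^ 2 * T + ρ 0 ^ 2 * (α 0 - α 1) ^ 2 / (2 * γ) * (1 - Real.exp (-2 * γ * T)) +
            2 * α 0 * ρ 0 * (α 1 - α 0) / γ * (1 - Real.exp (-γ * T))) := by
  intro M Rinv γ
  have hγ0 : γ ≠ 0 := (add_pos (mul_pos (hα 1) (hρ 0)) (mul_pos (hα 0) (hρ 1))).ne'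
  calc _ = ∫ s in (0:ℝ)..T,
        (σ 0 ^ 2 * ρ 0 / γ ^ 2 * (α 1 + ρ 1 * (α 0 - α 1) * Real.exp (-γ * s)) ^ 2 +
          σ 1 ^ 2 * ρ 1 / γ ^ 2 * (α 0 + ρ 0 * (α 1 - α 0) * Real.exp (-γ * s)) ^ 2) :=
        intervalIntegral.integral_congr fun s _ =>
          dotProduct_exp_meanFieldDrift_mulVec σ hρsum rfl hγ0 s
    _ = _ := by
      rw [intervalIntegral.integral_add, intervalIntegral.integral_const_mul,
        intervalIntegral.integral_const_mul, integral_sq_add_mul_exp _ _ hγ0,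
        integral_sq_add_mul_exp _ _ hγ0]
      · ring
      all_goals exact Continuous.intervalIntegrable (by fun_prop) _ _

/-- Lemma L:MainK=2: explicit formula for
`V_T² = ∫₀ᵀ ϱᵀ e^{Ms} R⁻¹ (e^{Ms})ᵀ ϱ ds` in the two-group case. -/
theorem statement13 (ρ α σ : Fin 2 → ℝ)
    (hρ : ∀ k, 0 < ρ k) (hρsum : ρ 0 + ρ 1 = 1)
    (hα : ∀ k, 0 < α k) (hσ : ∀ k, 0 < σ k) (T : ℝ) (hT : 0 < T) :
    let M : Matrix (Fin 2) (Fin 2) ℝ :=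
      Matrix.of fun i j => -(α i) * ((if i = j then (1:ℝ) else 0) - ρ j)
    let Rinv : Matrix (Fin 2) (Fin 2) ℝ := Matrix.diagonal fun i => σ i ^ 2 / ρ i
    let γ : ℝ := α 1 * ρ 0 + α 0 * ρ 1
    (∫ s in (0:ℝ)..T,
        ρ ⬝ᵥ (((NormedSpace.exp (s • M)) * Rinv * (NormedSpace.exp (s • M))ᵀ) *ᵥ ρ)) =
      σ 0 ^ 2 * ρ 0 / γ ^ 2 *
          (α 1 ^ 2 * T + ρ 1 ^ 2 * (α 0 - α 1) ^ 2 / (2 * γ) * (1 - Real.exp (-2 * γ * T)) +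
            2 * α 1 * ρ 1 * (α 0 - α 1) / γ * (1 - Real.exp (-γ * T))) +
        σ 1 ^ 2 * ρ 1 / γ ^ 2 *
          (α 0 ^ 2 * T + ρ 0 ^ 2 * (α 0 - α 1) ^ 2 / (2 * γ) * (1 - Real.exp (-2 * γ * T)) +
            2 * α 0 * ρ 0 * (α 1 - α 0) / γ * (1 - Real.exp (-γ * T))) :=
  statement13_general ρ α σ hρ hρsum hα T
end
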